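/- For integers t > s > 2 with gcd(s,t) = 1, the graph on s+t+1 vertices consisting of a path (a_0,…,a_{t−1}), a disjoint path (b_0,…,b_{s−2}), and two adjacent vertices a, b, where a is adjacent to all a_i and b is adjacent to all b_j and to a_{t−1}, is erasable and has exactly 2s+2t−2 edges. -/

import Mathlib

open SimpleGraph
/-- One step of the erase process with parameters `s`, `t`: delete an edge `e` that is
the unique edge between a set `V₁` of size `s` and a set `V₂` of size `t`, where
`V₁`, `V₂` and one extra vertex `v` partition the vertex set. -/
def EraseStep (s t : ℕ) {V : Type*} (G G' : SimpleGraph V) : Prop :=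
  ∃ e ∈ G.edgeSet, G'.edgeSet = G.edgeSet \ {e} ∧
    ∃ (V1 V2 : Set V) (v : V),
      Disjoint V1 V2 ∧ v ∉ V1 ∧ v ∉ V2 ∧ V1 ∪ V2 ∪ {v} = Set.univ ∧
      V1.ncard = s ∧ V2.ncard = t ∧
      (∃ x ∈ V1, ∃ y ∈ V2, e = s(x, y)) ∧
      ∀ x ∈ V1, ∀ y ∈ V2, G.Adj x y → s(x, y) = e

/-- `G` is erasable (with parameters `s`, `t`): its edges can be deleted one at a time
by erase steps until no edge remains. -/
def Erasable (s t : ℕ) {V : Type*} (G : SimpleGraph V) : Prop :=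
  ∃ (m : ℕ) (c : ℕ → SimpleGraph V), c 0 = G ∧ c m = ⊥ ∧
    ∀ i < m, EraseStep s t (c i) (c (i + 1))

/-- The graph on `s+t+1` vertices consisting of a path `a₀,…,a_{t−1}` (the `Fin t`
part), a disjoint path `b₀,…,b_{s−2}` (the `Fin (s−1)` part), and two adjacent
vertices `a` (`= 0 : Fin 2`) and `b` (`= 1 : Fin 2`), where `a` is adjacent to all
`aᵢ`, and `b` is adjacent to all `bⱼ` and to `a_{t−1}`. -/
def CoprimeGraph (s t : ℕ) : SimpleGraph (Fin t ⊕ Fin (s - 1) ⊕ Fin 2) :=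
  SimpleGraph.fromRel fun x y =>
    match x, y with
    | Sum.inl i, Sum.inl j => (i : ℕ) + 1 = j
    | Sum.inr (Sum.inl i), Sum.inr (Sum.inl j) => (i : ℕ) + 1 = j
    | Sum.inr (Sum.inr k), Sum.inl i => (k : ℕ) = 0 ∨ ((k : ℕ) = 1 ∧ (i : ℕ) = t - 1)
    | Sum.inr (Sum.inr k), Sum.inr (Sum.inl _) => (k : ℕ) = 1
    | Sum.inr (Sum.inr k), Sum.inr (Sum.inr l) => (k : ℕ) = 0 ∧ (l : ℕ) = 1
    | _, _ => False

/-!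
Write `a₀ ⋯ a_{t-1}` and `b₀ ⋯ b_{s-2}` for the two paths. The edges are erased in the order:
`b a_{t-1}`; the path edges `a_{p-1} a_p` for `p = s·k mod t`, `k = 1, …, t-1`; `a b`; the spokes
`a aᵢ`; the edges of the `b`-path; the spokes `b bⱼ`. Each edge is the last one still joining a set
`S` of `s` vertices to the `t` vertices outside `S` other than one left-out vertex.

For `b a_{t-1}` and `a b`, `S = {b, b₀, …, b_{s-2}}`. For the `k`-th edge of the `a`-path, `S` is
the cyclic arc `{s(k-1), …, s(k-1)+s-1} mod t` of that path, with `a` left out: the path edges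
leaving the arc are the new edge `a_{p-1} a_p` and the edge erased at step `k-1`, and its only other
edge to the rest is `b a_{t-1}`. As `gcd(s, t) = 1`, the values `s·k mod t` run through
`1, …, t-1`, so this phase erases the whole `a`-path. Then `S = {aᵢ} ∪ {b₀, …, b_{s-2}}` isolates
`a aᵢ`, and `S = {a₀, …, a_{s-2}} ∪ {bⱼ}` isolates the remaining edges at `bⱼ`.
-/

open SimpleGraph

section ErasingOrder

variable {V : Type*} (G : SimpleGraph V)

def crossingEdges (S : Finset V) (v : V) : Set (Sym2 V) :=
  {e | ∃ x ∈ S, ∃ y ∉ S, y ≠ v ∧ G.Adj x y ∧ e = s(x, y)}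

/-- In the partition of `EraseStep`, `V₁ = S`, `v` is the left-out vertex and `V₂` is the rest. -/
def IsLastCrossing (s : ℕ) (f : ℕ → Sym2 V) (n : ℕ) : Prop :=
  ∃ S : Finset V, ∃ v ∉ S, S.card = s ∧
    f n ∈ crossingEdges G S v ∧ crossingEdges G S v ⊆ f '' Set.Iic n

structure IsErasingOrder (s : ℕ) (f : ℕ → Sym2 V) (m : ℕ) : Prop where
  injOn : Set.InjOn f (Set.Iio m)
  edgeSet_subset : G.edgeSet ⊆ f '' Set.Iio m
  isLastCrossing : ∀ n < m, IsLastCrossing G s f n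

variable {G}

lemma crossingEdges_subset_edgeSet (S : Finset V) (v : V) : crossingEdges G S v ⊆ G.edgeSet := by
  rintro _ ⟨x, -, y, -, -, hxy, rfl⟩
  exact hxy

lemma eraseStep_deleteEdges [Fintype V] [DecidableEq V] {s t : ℕ}
    (hV : Fintype.card V = s + t + 1) {S : Finset V} {v : V} (hv : v ∉ S) (hS : S.card = s)
    {R : Set (Sym2 V)} {e : Sym2 V} (he : e ∈ crossingEdges G S v) (heR : e ∉ R)
    (hR : crossingEdges G S v ⊆ insert e R) :
    EraseStep s t (G.deleteEdges R) (G.deleteEdges (insert e R)) := by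
  obtain ⟨x, hx, y, hy, hyv, hxy, rfl⟩ := he
  refine ⟨s(x, y), by rw [edgeSet_deleteEdges]; exact ⟨hxy, heR⟩,
    by simp only [edgeSet_deleteEdges, Set.sdiff_sdiff, Set.union_singleton], S,
    ↑(insert v S)ᶜ, v, ?_, hv, by simp, ?_, by simpa, ?_, ⟨x, hx, y, by simp [hy, hyv], rfl⟩, ?_⟩
  · simp +contextual [Set.disjoint_left]
  · ext w
    simp only [Finset.coe_compl, Finset.coe_insert, Set.mem_union, Finset.mem_coe,
      Set.mem_compl_iff, Set.mem_insert_iff, Set.mem_singleton_iff, Set.mem_univ, iff_true]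
    tauto
  · rw [Set.ncard_coe_finset, Finset.card_compl, Finset.card_insert_of_notMem hv, hS, hV]
    omega
  · intro a ha b hb hab
    rw [deleteEdges_adj] at hab
    simp only [Finset.coe_compl, Finset.coe_insert, Set.mem_compl_iff, Set.mem_insert_iff,
      not_or, Finset.mem_coe] at hb
    exact (hR ⟨a, ha, b, hb.2, hb.1, hab.1, rfl⟩).resolve_right hab.2

namespace IsErasingOrder

variable {s : ℕ} {f : ℕ → Sym2 V} {m : ℕ}

theorem edgeSet_eq (h : IsErasingOrder G s f m) : G.edgeSet = f '' Set.Iio m := by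
  refine h.edgeSet_subset.antisymm ?_
  rintro _ ⟨n, hn, rfl⟩
  obtain ⟨S, v, -, -, hn, -⟩ := h.isLastCrossing n hn
  exact crossingEdges_subset_edgeSet S v hn

theorem ncard_edgeSet (h : IsErasingOrder G s f m) : G.edgeSet.ncard = m := by
  rw [h.edgeSet_eq, h.injOn.ncard_image, Set.ncard_Iio_nat]

theorem erasable [Fintype V] [DecidableEq V] {t : ℕ} (h : IsErasingOrder G s f m)
    (hV : Fintype.card V = s + t + 1) : Erasable s t G := by
  refine ⟨m, fun n => G.deleteEdges (f '' Set.Iio n), by simp, by simpa using h.edgeSet_subset,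
    fun n hn => ?_⟩
  obtain ⟨S, v, hv, hS, he, hR⟩ := h.isLastCrossing n hn
  beta_reduce
  rw [Set.Iio_add_one_eq_Iic, ← Set.Iio_insert, Set.image_insert_eq]
  refine eraseStep_deleteEdges hV hv hS he ?_ (by rwa [← Set.image_insert_eq, Set.Iio_insert])
  rintro ⟨k, hk, hfk⟩
  exact (Set.mem_Iio.mp hk).ne (h.injOn (hk.trans hn) hn hfk)

end IsErasingOrder

end ErasingOrder

theorem Nat.Coprime.mul_mod_ne_zero {s t n : ℕ} (h : s.Coprime t) (hn0 : n ≠ 0) (hnt : n < t) :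
    s * n % t ≠ 0 := by
  intro h0
  have := Nat.le_of_dvd (Nat.pos_of_ne_zero hn0)
    ((Nat.coprime_comm.mp h).dvd_of_dvd_mul_left (Nat.dvd_of_mod_eq_zero h0))
  omega

theorem Nat.add_mod_eq_or {a b t : ℕ} (ha : a < t) (hb : b < t) :
    (a + b) % t = a + b ∨ (a + b) % t + t = a + b := by
  rcases lt_or_ge (a + b) t with h | h
  · exact .inl (Nat.mod_eq_of_lt h)
  · rw [Nat.mod_eq_sub_mod h, Nat.mod_eq_of_lt (by omega)]
    omega

namespace Fin

/-- The cyclic interval `{u, u + 1, …, u + s - 1}` of `Fin t`. -/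
def arc {t : ℕ} (u : Fin t) (s : ℕ) : Finset (Fin t) := {i | ((i - u : Fin t) : ℕ) < s}

variable {t s : ℕ}

lemma card_arc [NeZero t] (u : Fin t) (hs : s ≤ t) : (arc u s).card = s := by
  rw [arc, Finset.card_equiv (Equiv.subRight u) (t := {k : Fin t | (k : ℕ) < s}) (by simp),
    card_filter_val_lt]
  omega

lemma mem_arc {u i : Fin t} :
    i ∈ arc u s ↔ (u : ℕ) ≤ i ∧ (i : ℕ) < u + s ∨ (i : ℕ) < u ∧ (i : ℕ) + t < u + s := by
  rw [arc, Finset.mem_filter, and_iff_right (Finset.mem_univ i)]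
  rcases le_or_gt u i with h | h
  · rw [sub_val_of_le h]
    rw [le_def] at h
    omega
  · rw [coe_sub_iff_lt.mpr h]
    rw [lt_def] at h
    omega

lemma arc_last {u i j : Fin t} (hs₀ : 0 < s) (hs : s < t) (hj : (j : ℕ) = (u + s) % t)
    (hij : (i : ℕ) + 1 = j) : i ∈ arc u s ∧ j ∉ arc u s := by
  rw [mem_arc, mem_arc]
  have := Nat.add_mod_eq_or u.isLt hs
  have := Nat.mod_lt (u + s) u.pos
  have := j.isLt
  generalize ((u : ℕ) + s) % t = p at *
  omega

lemma arc_exit {u i j : Fin t} (hs : s < t) (hi : i ∈ arc u s) (hj : j ∉ arc u s)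
    (hij : (i : ℕ) + 1 = j ∨ (j : ℕ) + 1 = i) :
    (j : ℕ) = (u + s) % t ∧ (i : ℕ) + 1 = j ∨ i = u ∧ (j : ℕ) + 1 = i := by
  rw [mem_arc] at hi hj
  have := Nat.add_mod_eq_or u.isLt hs
  have := Nat.mod_lt (u + s) u.pos
  have := i.isLt
  have := j.isLt
  rw [Fin.ext_iff]
  generalize ((u : ℕ) + s) % t = p at *
  omega

end Fin

namespace CoprimeGraph

open Fin.NatCast

local notation "hubA" => Sum.inr (Sum.inr (0 : Fin 2))
local notation "hubB" => Sum.inr (Sum.inr (1 : Fin 2))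

lemma vertex_cases {s t : ℕ} (x : Fin t ⊕ Fin (s - 1) ⊕ Fin 2) :
    (∃ i, x = .inl i) ∨ (∃ j, x = .inr (.inl j)) ∨ x = hubA ∨ x = hubB := by
  rcases x with i | j | h
  · exact .inl ⟨i, rfl⟩
  · exact .inr (.inl ⟨j, rfl⟩)
  · fin_cases h <;> simp

lemma index_cases {s t n : ℕ} (hn : n < 2 * t + 2 * s - 2) :
    n = 0 ∨ (∃ k, k + 1 < t ∧ n = k + 1) ∨ n = t ∨ (∃ i : Fin t, n = t + 1 + i) ∨
      (∃ j : Fin (s - 1), (j : ℕ) + 1 < s - 1 ∧ n = 2 * t + 1 + j) ∨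
      ∃ j : Fin (s - 1), n = 2 * t + s - 1 + j := by
  rcases Nat.lt_or_ge n t with h | h
  · rcases n with _ | k
    · exact .inl rfl
    · exact .inr (.inl ⟨k, h, rfl⟩)
  rcases h.eq_or_lt with h | h
  · exact .inr (.inr (.inl h.symm))
  rcases Nat.lt_or_ge n (2 * t + 1) with h₁ | h₁
  · exact .inr (.inr (.inr (.inl ⟨⟨n - (t + 1), by omega⟩, by simp; omega⟩)))
  rcases Nat.lt_or_ge n (2 * t + s - 1) with h₂ | h₂
  · exact .inr (.inr (.inr (.inr (.inl ⟨⟨n - (2 * t + 1), by omega⟩, by simp; omega,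
      by simp; omega⟩))))
  · exact .inr (.inr (.inr (.inr (.inr ⟨⟨n - (2 * t + s - 1), by omega⟩, by simp; omega⟩))))

variable (s t : ℕ) [NeZero t] [NeZero (s - 1)]

def edgeAt (n : ℕ) : Sym2 (Fin t ⊕ Fin (s - 1) ⊕ Fin 2) :=
  if n = 0 then s(hubB, .inl ((t - 1 : ℕ) : Fin t))
  else if n < t then s(.inl ((s * n % t - 1 : ℕ) : Fin t), .inl ((s * n % t : ℕ) : Fin t))
  else if n = t then s(hubA, hubB)
  else if n < 2 * t + 1 then s(hubA, .inl ((n - (t + 1) : ℕ) : Fin t))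
  else if n < 2 * t + s - 1 then
    s(.inr (.inl ((n - (2 * t + 1) : ℕ) : Fin (s - 1))),
      .inr (.inl ((n - 2 * t : ℕ) : Fin (s - 1))))
  else s(hubB, .inr (.inl ((n - (2 * t + s - 1) : ℕ) : Fin (s - 1))))

variable {s t}

lemma edgeAt_zero {i : Fin t} (hi : (i : ℕ) = t - 1) : edgeAt s t 0 = s(hubB, .inl i) := by
  rw [edgeAt, if_pos rfl, ← hi, Fin.cast_val_eq_self]

lemma edgeAt_of_lt {n : ℕ} (hn0 : n ≠ 0) (hnt : n < t) {i j : Fin t} (hj : (j : ℕ) = s * n % t)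
    (hij : (i : ℕ) + 1 = j) : edgeAt s t n = s(.inl i, .inl j) := by
  rw [edgeAt, if_neg hn0, if_pos hnt, ← hj, show (j : ℕ) - 1 = i by omega, Fin.cast_val_eq_self,
    Fin.cast_val_eq_self]

lemma edgeAt_self : edgeAt s t t = s(hubA, hubB) := by
  rw [edgeAt, if_neg (NeZero.ne t), if_neg (lt_irrefl t), if_pos rfl]

lemma edgeAt_spokeA (i : Fin t) : edgeAt s t (t + 1 + i) = s(hubA, .inl i) := by
  rw [edgeAt, if_neg (by omega), if_neg (by omega), if_neg (by omega), if_pos (by omega),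
    show t + 1 + i - (t + 1) = (i : ℕ) by omega, Fin.cast_val_eq_self]

lemma edgeAt_pathB {j j' : Fin (s - 1)} (h : (j : ℕ) + 1 = j') :
    edgeAt s t (2 * t + 1 + j) = s(.inr (.inl j), .inr (.inl j')) := by
  have := j'.isLt
  rw [edgeAt, if_neg (by omega), if_neg (by omega), if_neg (by omega), if_neg (by omega),
    if_pos (by omega), show 2 * t + 1 + j - (2 * t + 1) = (j : ℕ) by omega,
    show 2 * t + 1 + j - 2 * t = (j' : ℕ) by omega, Fin.cast_val_eq_self, Fin.cast_val_eq_self]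

lemma edgeAt_spokeB (j : Fin (s - 1)) :
    edgeAt s t (2 * t + s - 1 + j) = s(hubB, .inr (.inl j)) := by
  have := j.isLt
  rw [edgeAt, if_neg (by omega), if_neg (by omega), if_neg (by omega), if_neg (by omega),
    if_neg (by omega), show 2 * t + s - 1 + j - (2 * t + s - 1) = (j : ℕ) by omega,
    Fin.cast_val_eq_self]

lemma exists_edgeAt_eq_pathA (hcop : s.Coprime t) {i j : Fin t}
    (hij : (i : ℕ) + 1 = j ∨ (j : ℕ) + 1 = i) : ∃ n < t, edgeAt s t n = s(.inl i, .inl j) := by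
  wlog h : (i : ℕ) + 1 = j generalizing i j
  · obtain ⟨n, hnt, hn⟩ := this hij.symm (hij.resolve_left h)
    exact ⟨n, hnt, hn.trans Sym2.eq_swap⟩
  obtain ⟨n, hnt, hn⟩ := Nat.exists_mul_mod_eq_of_coprime j hcop (NeZero.ne t)
  rw [Nat.mod_eq_of_lt j.isLt] at hn
  have hn0 : n ≠ 0 := by rintro rfl; simp at hn; omega
  exact ⟨n, hnt, edgeAt_of_lt hn0 hnt hn.symm h⟩

/-- Edges from different phases have endpoints of different kinds; within the phase of the
`a`-path, `n ↦ s * n % t` is injective. -/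
lemma injOn_edgeAt (hcop : s.Coprime t) :
    Set.InjOn (edgeAt s t) (Set.Iio (2 * t + 2 * s - 2)) := by
  intro a ha b hb hab
  have := NeZero.ne (s - 1)
  simp only [Set.mem_Iio] at ha hb
  simp only [edgeAt] at hab
  split_ifs at hab <;> simp [Fin.ext_iff] at hab <;>
    (try simp (disch := omega) only [Nat.mod_eq_of_lt] at hab)
  all_goals first
    | omega
    | refine (Nat.ModEq.cancel_left_of_coprime (Nat.coprime_comm.mp hcop) ?_).eq_of_lt_of_lt
        ‹a < t› ‹b < t›
      have := Nat.mod_le (s * a % t - 1) t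
      have := Nat.mod_le (s * b % t - 1) t
      unfold Nat.ModEq
      omega

lemma edgeSet_subset_image_edgeAt (hcop : s.Coprime t) :
    (CoprimeGraph s t).edgeSet ⊆ edgeAt s t '' Set.Iio (2 * t + 2 * s - 2) := by
  suffices h : ∀ x y, (CoprimeGraph s t).Adj x y →
      ∃ n < 2 * t + 2 * s - 2, edgeAt s t n = s(x, y) by
    intro e he
    induction e using Sym2.ind with
    | _ x y => exact h x y he
  intro x y hxy
  have := NeZero.ne (s - 1)
  rcases vertex_cases x with ⟨i, rfl⟩ | ⟨j, rfl⟩ | rfl | rfl <;>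
  rcases vertex_cases y with ⟨i', rfl⟩ | ⟨j', rfl⟩ | rfl | rfl <;>
    simp [CoprimeGraph] at hxy
  · obtain ⟨n, hn, he⟩ := exists_edgeAt_eq_pathA hcop hxy.2
    exact ⟨n, by omega, he⟩
  · exact ⟨t + 1 + i, by omega, (edgeAt_spokeA i).trans Sym2.eq_swap⟩
  · exact ⟨0, by omega, (edgeAt_zero hxy).trans Sym2.eq_swap⟩
  · rcases hxy.2 with h | h
    · exact ⟨2 * t + 1 + j, by omega, edgeAt_pathB h⟩
    · exact ⟨2 * t + 1 + j', by omega, (edgeAt_pathB h).trans Sym2.eq_swap⟩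
  · exact ⟨2 * t + s - 1 + j, by omega, (edgeAt_spokeB j).trans Sym2.eq_swap⟩
  · exact ⟨t + 1 + i', by omega, edgeAt_spokeA i'⟩
  · exact ⟨t, by omega, edgeAt_self⟩
  · exact ⟨0, by omega, edgeAt_zero hxy⟩
  · exact ⟨2 * t + s - 1 + j', by omega, edgeAt_spokeB j'⟩
  · exact ⟨t, by omega, edgeAt_self.trans Sym2.eq_swap⟩

lemma isLastCrossing_zero : IsLastCrossing (CoprimeGraph s t) s (edgeAt s t) 0 := by
  have := NeZero.ne (s - 1)
  refine ⟨(∅ : Finset (Fin t)).disjSum (Finset.univ.disjSum {1}), hubA, by simp,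
    by simp; omega, ⟨hubB, by simp, .inl ⟨t - 1, Nat.sub_one_lt (NeZero.ne t)⟩, by simp, by simp,
    by simp [CoprimeGraph], edgeAt_zero rfl⟩, ?_⟩
  rintro _ ⟨x, hx, y, hy, hyv, hxy, rfl⟩
  rcases vertex_cases x with ⟨a, rfl⟩ | ⟨b, rfl⟩ | rfl | rfl <;>
  rcases vertex_cases y with ⟨a', rfl⟩ | ⟨b', rfl⟩ | rfl | rfl <;>
    simp [CoprimeGraph] at hx hy hyv hxy ⊢
  exact edgeAt_zero hxy

lemma isLastCrossing_of_lt (hst : s < t) (hcop : s.Coprime t) {k : ℕ} (hk : k + 1 < t) :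
    IsLastCrossing (CoprimeGraph s t) s (edgeAt s t) (k + 1) := by
  have := NeZero.ne (s - 1)
  set u : Fin t := ⟨s * k % t, Nat.mod_lt _ (by omega)⟩
  have hp : s * (k + 1) % t = (u + s) % t := by rw [Nat.mod_add_mod, Nat.mul_succ]
  have hp0 := hcop.mul_mod_ne_zero (n := k + 1) (by omega) hk
  have hpt := Nat.mod_lt (s * (k + 1)) (by omega : 0 < t)
  obtain ⟨hlast, hnext⟩ := Fin.arc_last (i := ⟨s * (k + 1) % t - 1, by omega⟩)
    (j := ⟨s * (k + 1) % t, hpt⟩) (by omega) hst hp (by simp; omega)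
  refine ⟨(u.arc s).disjSum ∅, hubA, by simp, by simp [Fin.card_arc _ hst.le],
    ⟨.inl _, Finset.inl_mem_disjSum.mpr hlast, .inl _, by simpa using hnext, by simp,
      by simp [CoprimeGraph]; omega, edgeAt_of_lt k.succ_ne_zero hk rfl (by simp; omega)⟩, ?_⟩
  rintro _ ⟨x, hx, y, hy, hyv, hxy, rfl⟩
  rcases vertex_cases x with ⟨a, rfl⟩ | ⟨b, rfl⟩ | rfl | rfl <;>
  rcases vertex_cases y with ⟨a', rfl⟩ | ⟨b', rfl⟩ | rfl | rfl <;>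
    simp [CoprimeGraph] at hx hy hyv hxy ⊢
  · rcases Fin.arc_exit hst hx hy hxy.2 with ⟨hj, h⟩ | ⟨rfl, h⟩
    · exact ⟨k + 1, le_rfl, edgeAt_of_lt k.succ_ne_zero hk (hj.trans hp.symm) h⟩
    · have hk0 : k ≠ 0 := by rintro rfl; simp [u] at h
      exact ⟨k, by omega, (edgeAt_of_lt hk0 (by omega) rfl h).trans Sym2.eq_swap⟩
  · exact ⟨0, by omega, (edgeAt_zero hxy).trans Sym2.eq_swap⟩

lemma isLastCrossing_self : IsLastCrossing (CoprimeGraph s t) s (edgeAt s t) t := by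
  have := NeZero.ne (s - 1)
  have := NeZero.ne t
  refine ⟨(∅ : Finset (Fin t)).disjSum (Finset.univ.disjSum {1}), .inl ⟨0, by omega⟩, by simp,
    by simp; omega, ⟨hubB, by simp, hubA, by simp, by simp, by simp [CoprimeGraph],
    edgeAt_self.trans Sym2.eq_swap⟩, ?_⟩
  rintro _ ⟨x, hx, y, hy, hyv, hxy, rfl⟩
  rcases vertex_cases x with ⟨a, rfl⟩ | ⟨b, rfl⟩ | rfl | rfl <;>
  rcases vertex_cases y with ⟨a', rfl⟩ | ⟨b', rfl⟩ | rfl | rfl <;>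
    simp [CoprimeGraph] at hx hy hyv hxy ⊢
  · exact ⟨0, by omega, edgeAt_zero hxy⟩
  · exact ⟨t, le_rfl, edgeAt_self.trans Sym2.eq_swap⟩

lemma isLastCrossing_spokeA (hcop : s.Coprime t) (i : Fin t) :
    IsLastCrossing (CoprimeGraph s t) s (edgeAt s t) (t + 1 + i) := by
  have := NeZero.ne (s - 1)
  refine ⟨({i} : Finset (Fin t)).disjSum (Finset.univ.disjSum ∅), hubB, by simp,
    by simp; omega, ⟨.inl i, by simp, hubA, by simp, by simp, by simp [CoprimeGraph],
    (edgeAt_spokeA i).trans Sym2.eq_swap⟩, ?_⟩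
  rintro _ ⟨x, hx, y, hy, hyv, hxy, rfl⟩
  rcases vertex_cases x with ⟨a, rfl⟩ | ⟨b, rfl⟩ | rfl | rfl <;>
  rcases vertex_cases y with ⟨a', rfl⟩ | ⟨b', rfl⟩ | rfl | rfl <;>
    simp [CoprimeGraph] at hx hy hyv hxy ⊢
  · obtain ⟨n, hn, he⟩ := exists_edgeAt_eq_pathA hcop hxy.2
    exact ⟨n, by omega, he⟩
  · subst hx
    exact ⟨t + 1 + a, le_rfl, (edgeAt_spokeA a).trans Sym2.eq_swap⟩

lemma isLastCrossing_pathB (hst : s < t) (hcop : s.Coprime t) {j : Fin (s - 1)}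
    (hj : (j : ℕ) + 1 < s - 1) :
    IsLastCrossing (CoprimeGraph s t) s (edgeAt s t) (2 * t + 1 + j) := by
  have := NeZero.ne (s - 1)
  refine ⟨({i | (i : ℕ) < s - 1} : Finset (Fin t)).disjSum (({j} : Finset _).disjSum ∅), hubB,
    by simp, by simp [Fin.card_filter_val_lt]; omega, ⟨.inr (.inl j), by simp,
    .inr (.inl ⟨j + 1, hj⟩), by simp [Fin.ext_iff], by simp,
    by simpa [CoprimeGraph] using Fin.ne_of_val_ne (by simp), edgeAt_pathB rfl⟩, ?_⟩
  rintro _ ⟨x, hx, y, hy, hyv, hxy, rfl⟩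
  rcases vertex_cases x with ⟨a, rfl⟩ | ⟨b, rfl⟩ | rfl | rfl <;>
  rcases vertex_cases y with ⟨a', rfl⟩ | ⟨b', rfl⟩ | rfl | rfl <;>
    simp [CoprimeGraph] at hx hy hyv hxy ⊢
  · obtain ⟨n, hn, he⟩ := exists_edgeAt_eq_pathA hcop hxy.2
    exact ⟨n, by omega, he⟩
  · exact ⟨t + 1 + a, by omega, (edgeAt_spokeA a).trans Sym2.eq_swap⟩
  · subst hx
    rcases hxy.2 with h | h
    · exact ⟨2 * t + 1 + b, le_rfl, edgeAt_pathB h⟩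
    · exact ⟨2 * t + 1 + b', by omega, (edgeAt_pathB h).trans Sym2.eq_swap⟩

lemma isLastCrossing_spokeB (hst : s < t) (hcop : s.Coprime t) (j : Fin (s - 1)) :
    IsLastCrossing (CoprimeGraph s t) s (edgeAt s t) (2 * t + s - 1 + j) := by
  have := NeZero.ne (s - 1)
  refine ⟨({i | (i : ℕ) < s - 1} : Finset (Fin t)).disjSum (({j} : Finset _).disjSum ∅), hubA,
    by simp, by simp [Fin.card_filter_val_lt]; omega, ⟨.inr (.inl j), by simp, hubB, by simp,
    by simp, by simp [CoprimeGraph], (edgeAt_spokeB j).trans Sym2.eq_swap⟩, ?_⟩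
  rintro _ ⟨x, hx, y, hy, hyv, hxy, rfl⟩
  rcases vertex_cases x with ⟨a, rfl⟩ | ⟨b, rfl⟩ | rfl | rfl <;>
  rcases vertex_cases y with ⟨a', rfl⟩ | ⟨b', rfl⟩ | rfl | rfl <;>
    simp [CoprimeGraph] at hx hy hyv hxy ⊢
  · obtain ⟨n, hn, he⟩ := exists_edgeAt_eq_pathA hcop hxy.2
    exact ⟨n, by omega, he⟩
  · omega
  · subst hx
    rcases hxy.2 with h | h
    · exact ⟨2 * t + 1 + b, by omega, edgeAt_pathB h⟩
    · exact ⟨2 * t + 1 + b', by omega, (edgeAt_pathB h).trans Sym2.eq_swap⟩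
  · subst hx
    exact ⟨2 * t + s - 1 + b, le_rfl, (edgeAt_spokeB b).trans Sym2.eq_swap⟩

theorem isErasingOrder_edgeAt (hst : s < t) (hcop : s.Coprime t) :
    IsErasingOrder (CoprimeGraph s t) s (edgeAt s t) (2 * t + 2 * s - 2) where
  injOn := injOn_edgeAt hcop
  edgeSet_subset := edgeSet_subset_image_edgeAt hcop
  isLastCrossing n hn := by
    rcases index_cases hn with rfl | ⟨k, hk, rfl⟩ | h | ⟨i, rfl⟩ | ⟨j, hj, rfl⟩ | ⟨j, rfl⟩
    · exact isLastCrossing_zero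
    · exact isLastCrossing_of_lt hst hcop hk
    · rw [h]
      exact isLastCrossing_self
    · exact isLastCrossing_spokeA hcop i
    · exact isLastCrossing_pathB hst hcop hj
    · exact isLastCrossing_spokeB hst hcop j

end CoprimeGraph

/-- For `t > s > 2` with `gcd(s,t) = 1`, the above graph is erasable and has
exactly `2s+2t−2` edges. -/
theorem coprimeGraph_erasable (s t : ℕ) (hs : 2 < s) (hst : s < t)
    (hgcd : Nat.gcd s t = 1) :
    Erasable s t (CoprimeGraph s t) ∧
      (CoprimeGraph s t).edgeSet.ncard = 2 * s + 2 * t - 2 := by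
  have : NeZero t := ⟨by omega⟩
  have : NeZero (s - 1) := ⟨by omega⟩
  have h := CoprimeGraph.isErasingOrder_edgeAt hst hgcd
  exact ⟨h.erasable (by simp; omega), by rw [h.ncard_edgeSet]; omega⟩
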